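/- arXiv:0805.1618 — 2 statements merged into one kernel-verified Lean document; each statement's English description precedes it below -/
import Mathlib

section
/- Let Λ = (λ_0,…,λ_n) ∈ ℂ^{n+1} and assume that E_Λ is closed under complex conjugation. Then for real numbers a < b the following are equivalent: (a) E_Λ is an extended Chebyshev system over the closed interval [a,b]; (b) E_Λ is an extended Chebyshev system for every two-point set {a,x} with x ∈ (a,b]; (c) for each k = 0,…,n, the function x ↦ Φ_{n,k}(x−a) has no zeros in (a,b]. -/
/-!
Every element of `E_Λ` with a zero of order `n - k` at `a` is a combination
`∑_{j ≤ k} c_j Φ^{(j)}(· - a)`, and the derivatives of order `≤ k` of such a combination at `x`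
are the entries of `(Φ^{(i+j)}(x - a))_{i,j ≤ k} c`. So a nonzero element with `n - k` zeros at
`a` and `k + 1` zeros at `x` exists exactly when `Φ_{n,k}(x - a) = 0`; this is (b) ⇔ (c).

For (c) ⇒ (a), closure under conjugation makes `Φ` real, so the real and imaginary parts of
such a combination are real combinations of the functions `Φ^{(j)}(· - a)`, whose Wronskians
are the `Φ_{n,k}(· - a)`. Nonvanishing Wronskians on `(a, b]` bound the number of zeros there
by `k`: divide by the first function, apply Rolle's theorem, and induct on the size of the
system, using `W(g₀, …, g_{q+1}) = g₀^{q+2} W((g₁/g₀)', …, (g_{q+1}/g₀)')`.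
-/

open Filter Topology Set

noncomputable section

/-- The differential operator `(d/dx − λ₀)⋯(d/dx − λₙ)` applied to `f`,
where `λ₀,…,λₙ` are the entries of the list. -/
def LOp : List ℂ → (ℝ → ℂ) → (ℝ → ℂ)
  | [], f => f
  | c :: r, f => LOp r (fun x => deriv f x - c * f x)

/-- The space `E_Λ` of exponential polynomials with eigenvalue vector `l`. -/
def ExpPoly (l : List ℂ) : Set (ℝ → ℂ) :=
  {f | ContDiff ℝ (⊤ : ℕ∞) f ∧ LOp l f = 0}

/-- `f` has a zero of order (multiplicity) exactly `k` at `x₀`. -/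
def HasZeroOfOrder (f : ℝ → ℂ) (x₀ : ℝ) (k : ℕ) : Prop :=
  (∀ j < k, iteratedDeriv j f x₀ = 0) ∧ iteratedDeriv k f x₀ ≠ 0

/-- `E_l` (with `l.length = n + 1`) is an extended Chebyshev system for `A ⊆ ℝ`:
every nonzero member has at most `n` zeros in `A`, counted with multiplicity. -/
def IsExtChebyshev (l : List ℂ) (A : Set ℝ) : Prop :=
  ∀ f ∈ ExpPoly l, f ≠ 0 → ∀ (s : Finset ℝ) (m : ℝ → ℕ),
    (↑s : Set ℝ) ⊆ A → (∀ x ∈ s, ∀ j < m x, iteratedDeriv j f x = 0) →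
    ∑ x ∈ s, m x ≤ l.length - 1

/-- `p k`, `k = 0,…,n` (with `l.length = n + 1`) is the normalized Bernstein basis of
`E_l` for the points `a ≠ b`: `p k` lies in `E_l`, has a zero of order exactly `k`
at `a`, a zero of order exactly `n − k` at `b`, and `(p k)^{(k)}(a) = 1`. -/
def IsBernsteinBasis (l : List ℂ) (a b : ℝ) (p : ℕ → ℝ → ℂ) : Prop :=
  ∀ k ≤ l.length - 1,
    p k ∈ ExpPoly l ∧ HasZeroOfOrder (p k) a k ∧
      HasZeroOfOrder (p k) b (l.length - 1 - k) ∧ iteratedDeriv k (p k) a = 1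

/-- `E_l` is closed under (pointwise) complex conjugation. -/
def ConjClosed (l : List ℂ) : Prop :=
  ∀ f ∈ ExpPoly l, (fun x => starRingEnd ℂ (f x)) ∈ ExpPoly l

open scoped ContDiff
open Matrix

section IteratedDeriv

variable {𝕜 : Type*} [NontriviallyNormedField 𝕜]
  {F G : Type*} [NormedAddCommGroup F] [NormedSpace 𝕜 F] [NormedAddCommGroup G] [NormedSpace 𝕜 G]

theorem iteratedDeriv_iteratedDeriv (i j : ℕ) (f : 𝕜 → F) :
    iteratedDeriv i (iteratedDeriv j f) = iteratedDeriv (i + j) f := by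
  simp only [iteratedDeriv_eq_iterate, Function.iterate_add_apply]

theorem ContinuousLinearMap.iteratedDeriv_comp_left (g : F →L[𝕜] G) {f : 𝕜 → F}
    (hf : ContDiff 𝕜 ∞ f) (i : ℕ) :
    iteratedDeriv i (g ∘ f) = g ∘ iteratedDeriv i f := by
  funext x
  simp [iteratedDeriv_eq_iteratedFDeriv,
    g.iteratedFDeriv_comp_left hf.contDiffAt (i := i) (mod_cast le_top)]

theorem iteratedDeriv_fun_sum_mul {𝕜' : Type*} [NormedField 𝕜'] [NormedAlgebra 𝕜 𝕜']
    {ι : Type*} {s : Finset ι} {c : ι → 𝕜'} {g : ι → 𝕜 → 𝕜'}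
    (hg : ∀ j ∈ s, ContDiff 𝕜 ∞ (g j)) (i : ℕ) (x : 𝕜) :
    iteratedDeriv i (fun y => ∑ j ∈ s, c j * g j y) x = ∑ j ∈ s, c j * iteratedDeriv i (g j) x := by
  rw [iteratedDeriv_fun_sum fun j hj => (contDiff_const.mul (hg j hj)).contDiffAt.of_le
    (mod_cast le_top)]
  simp only [iteratedDeriv_const_mul_field]

theorem ContDiff.iteratedDeriv {f : 𝕜 → F} (hf : ContDiff 𝕜 ∞ f) (m : ℕ) :
    ContDiff 𝕜 ∞ (iteratedDeriv m f) := by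
  rw [iteratedDeriv_eq_iterate]
  exact hf.iterate_deriv m

end IteratedDeriv

def HasZerosWithMult {F : Type*} [NormedAddCommGroup F] [NormedSpace ℝ F] (f : ℝ → F)
    (s : Finset ℝ) (m : ℝ → ℕ) : Prop :=
  ∀ x ∈ s, ∀ j < m x, iteratedDeriv j f x = 0

namespace HasZerosWithMult

variable {F G : Type*} [NormedAddCommGroup F] [NormedSpace ℝ F] [NormedAddCommGroup G]
  [NormedSpace ℝ G] {f : ℝ → F} {φ : ℝ → ℝ} {s : Finset ℝ} {m : ℝ → ℕ} {I : Set ℝ}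

theorem sum_eq_zero (h : HasZerosWithMult φ s m) (hφ : ∀ x ∈ s, φ x ≠ 0) : ∑ x ∈ s, m x = 0 :=
  Finset.sum_eq_zero fun x hx => by
    by_contra hm
    exact hφ x hx (by simpa using h x hx 0 (Nat.pos_of_ne_zero hm))

theorem of_mul {ψ g : ℝ → ℝ} {U : Set ℝ} (hU : IsOpen U) (hs : ↑s ⊆ U) (hψ : ContDiffOn ℝ ∞ ψ U)
    (hg : ContDiffOn ℝ ∞ g U) (hg0 : ∀ x ∈ U, g x ≠ 0) (heq : Set.EqOn φ (fun y => ψ y * g y) U)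
    (h : HasZerosWithMult φ s m) : HasZerosWithMult ψ s m := by
  intro x hx j
  have hxU := hs hx
  induction j using Nat.strong_induction_on with
  | _ j ih =>
    intro hj
    have hLeibniz := iteratedDeriv_fun_mul (n := j)
      ((hψ.contDiffAt (hU.mem_nhds hxU)).of_le (mod_cast le_top))
      ((hg.contDiffAt (hU.mem_nhds hxU)).of_le (mod_cast le_top))
    -- only the term with all `j` derivatives on `ψ` survives
    rw [Finset.sum_range_succ, Finset.sum_eq_zero fun r hr => by
      rw [ih r (Finset.mem_range.mp hr) (by have := Finset.mem_range.mp hr; omega)]; simp,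
      ← heq.iteratedDeriv_of_isOpen hU j hxU, h x hx j hj] at hLeibniz
    simpa [hg0 x hxU] using hLeibniz.symm

theorem ite_mem (h : HasZerosWithMult f s m) (y : ℝ) :
    ∀ j < (if y ∈ s then m y else 0), iteratedDeriv j f y = 0 := fun j hj => by
  split_ifs at hj with hy
  exacts [h y hy j hj, absurd hj (Nat.not_lt_zero _)]

theorem comp_clm (h : HasZerosWithMult f s m) (L : F →L[ℝ] G) (hf : ContDiff ℝ ∞ f) :
    HasZerosWithMult (L ∘ f) s m := fun x hx j hj => by
  rw [L.iteratedDeriv_comp_left hf]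
  simp [h x hx j hj]

theorem insert_insert {s₀ : Finset ℝ} {m₀ : ℝ → ℕ} (h₀ : HasZerosWithMult φ s₀ m₀) {b ξ a : ℝ}
    (hs₀ : ∀ y ∈ s₀, y ≤ b) (hbξ : b < ξ) (hξa : ξ < a) (hξ : φ ξ = 0) {k : ℕ}
    (ha : ∀ j < k, iteratedDeriv j φ a = 0) :
    HasZerosWithMult φ (insert a (insert ξ s₀)) (Function.update (Function.update m₀ ξ 1) a k) ∧
      ∑ x ∈ insert a (insert ξ s₀), Function.update (Function.update m₀ ξ 1) a k x =
        k + 1 + ∑ x ∈ s₀, m₀ x := by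
  classical
  have hξs₀ : ξ ∉ s₀ := fun hξ => (hs₀ ξ hξ).not_gt hbξ
  have has₀ : a ∉ s₀ := fun ha => (hs₀ a ha).not_gt (hbξ.trans hξa)
  refine ⟨?_, ?_⟩
  · simp only [HasZerosWithMult, Finset.mem_insert, forall_eq_or_imp]
    refine ⟨by simpa using ha, fun j hj => ?_, fun y hy j hj => ?_⟩
    · simp [hξa.ne] at hj
      simpa [hj] using hξ
    · have hyξ : y < ξ := (hs₀ y hy).trans_lt hbξ
      exact h₀ y hy j (by simpa [(hyξ.trans hξa).ne, hyξ.ne] using hj)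
  · rw [Finset.sum_insert (by simp [hξa.ne', has₀]), Finset.sum_insert hξs₀,
      Finset.sum_update_of_notMem has₀, Finset.sum_update_of_notMem hξs₀]
    simp [hξa.ne, add_assoc]

theorem exists_deriv_of_pos (hI : I.OrdConnected) (hφ : ContinuousOn φ I) :
    ∀ t : Finset ℝ, ↑t ⊆ I → (∀ x ∈ t, m x ≠ 0) → HasZerosWithMult φ t m →
      ∃ (s' : Finset ℝ) (m' : ℝ → ℕ), ↑s' ⊆ I ∧ (∀ y ∈ s', ∃ x ∈ t, y ≤ x) ∧
        HasZerosWithMult (deriv φ) s' m' ∧ ∑ x ∈ t, m x ≤ ∑ x ∈ s', m' x + 1 := by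
  classical
  -- the bound `y ≤ x` keeps the zeros of `deriv φ` found so far left of the next Rolle point
  intro t
  induction t using Finset.induction_on_max with
  | empty => exact fun _ _ _ => ⟨∅, 0, by simp, by simp, by simp [HasZerosWithMult], by simp⟩
  | insert a t hlt ih =>
    intro hsub hpos h
    simp only [Finset.coe_insert, Set.insert_subset_iff, Finset.mem_insert,
      forall_eq_or_imp] at hsub hpos
    have hzero : ∀ x ∈ insert a t, φ x = 0 := fun x hx => by
      simpa using h x hx 0 (Nat.pos_of_ne_zero (by
        rcases Finset.mem_insert.mp hx with rfl | hx; exacts [hpos.1, hpos.2 x hx]))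
    have hda : ∀ j < m a - 1, iteratedDeriv j (deriv φ) a = 0 := fun j hj => by
      rw [← iteratedDeriv_succ']
      exact h a (Finset.mem_insert_self a t) (j + 1) (by omega)
    rw [Finset.sum_insert fun ha => lt_irrefl a (hlt a ha)]
    rcases t.eq_empty_or_nonempty with rfl | hne
    · exact ⟨{a}, fun _ => m a - 1, by simpa using hsub.1, by simp,
        by simpa [HasZerosWithMult] using hda, by simp; omega⟩
    obtain ⟨s₀, m₀, hs₀I, hs₀le, h₀, hsum₀⟩ :=
      ih hsub.2 hpos.2 fun x hx => h x (Finset.mem_insert_of_mem hx)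
    set b := t.max' hne
    have hba : b < a := hlt b (t.max'_mem hne)
    have hbI : b ∈ I := hsub.2 (t.max'_mem hne)
    -- Rolle between the two largest zeros
    obtain ⟨ξ, ⟨hbξ, hξa⟩, hξ⟩ := exists_deriv_eq_zero hba (hφ.mono (hI.out hbI hsub.1))
      ((hzero b (Finset.mem_insert_of_mem (t.max'_mem hne))).trans
        (hzero a (Finset.mem_insert_self a t)).symm)
    have hs₀b : ∀ y ∈ s₀, y ≤ b := fun y hy => by
      obtain ⟨x, hx, hyx⟩ := hs₀le y hy
      exact hyx.trans (t.le_max' x hx)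
    obtain ⟨hzeros, hsum⟩ := h₀.insert_insert hs₀b hbξ hξa hξ hda
    refine ⟨_, _, ?_, ?_, hzeros, by omega⟩
    · simp only [Finset.coe_insert, Set.insert_subset_iff]
      exact ⟨hsub.1, hI.out hbI hsub.1 ⟨hbξ.le, hξa.le⟩, hs₀I⟩
    · simp only [Finset.mem_insert, forall_eq_or_imp]
      exact ⟨⟨a, by simp, le_rfl⟩, ⟨a, by simp, hξa.le⟩,
        fun y hy => ⟨a, by simp, (hs₀b y hy).trans hba.le⟩⟩

theorem exists_deriv (hI : I.OrdConnected) (hφ : ContinuousOn φ I) (hs : ↑s ⊆ I)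
    (h : HasZerosWithMult φ s m) :
    ∃ (s' : Finset ℝ) (m' : ℝ → ℕ), ↑s' ⊆ I ∧ HasZerosWithMult (deriv φ) s' m' ∧
      ∑ x ∈ s, m x ≤ ∑ x ∈ s', m' x + 1 := by
  obtain ⟨s', m', hs', -, h', hsum⟩ := exists_deriv_of_pos hI hφ (s.filter (m · ≠ 0))
    ((Finset.coe_subset.mpr (Finset.filter_subset _ s)).trans hs)
    (fun x hx => (Finset.mem_filter.mp hx).2) (fun x hx => h x (Finset.mem_filter.mp hx).1)
  exact ⟨s', m', hs', h', by rwa [Finset.sum_filter_ne_zero] at hsum⟩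

end HasZerosWithMult

def wronskianMatrix (g : ℕ → ℝ → ℝ) (q : ℕ) (x : ℝ) : Matrix (Fin (q + 1)) (Fin (q + 1)) ℝ :=
  Matrix.of fun i j => iteratedDeriv i (g j) x

theorem det_wronskianMatrix_zero (g : ℕ → ℝ → ℝ) (x : ℝ) :
    (wronskianMatrix g 0 x).det = g 0 x := by
  simp [wronskianMatrix]

section Wronskian

variable {x : ℝ}

theorem wronskianMatrix_mul {φ : ℕ → ℝ → ℝ} {f : ℝ → ℝ} (hφ : ∀ j, ContDiffAt ℝ ∞ (φ j) x)
    (hf : ContDiffAt ℝ ∞ f x) (q : ℕ) :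
    wronskianMatrix (fun j y => φ j y * f y) q x =
      (Matrix.of fun i r : Fin (q + 1) => ((i : ℕ).choose r : ℝ) * iteratedDeriv (i - r) f x) *
        wronskianMatrix φ q x := by
  ext i j
  simp only [wronskianMatrix, Matrix.of_apply, Matrix.mul_apply]
  rw [iteratedDeriv_fun_mul ((hφ j).of_le (mod_cast le_top)) (hf.of_le (mod_cast le_top)),
    Fin.sum_univ_eq_sum_range (fun r => ((i : ℕ).choose r : ℝ) * iteratedDeriv (i - r) f x *
      iteratedDeriv r (φ j) x)]
  refine (Finset.sum_subset ?_ fun r _ hr => ?_).trans (Finset.sum_congr rfl fun r _ => by ring)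
  · exact Finset.range_subset_range.mpr i.is_lt
  · rw [Nat.choose_eq_zero_of_lt (by simpa using hr)]; simp

theorem det_wronskianMatrix_mul {φ : ℕ → ℝ → ℝ} {f : ℝ → ℝ} (hφ : ∀ j, ContDiffAt ℝ ∞ (φ j) x)
    (hf : ContDiffAt ℝ ∞ f x) (q : ℕ) :
    (wronskianMatrix (fun j y => φ j y * f y) q x).det = f x ^ (q + 1) *
      (wronskianMatrix φ q x).det := by
  rw [wronskianMatrix_mul hφ hf, Matrix.det_mul, Matrix.det_of_isLowerTriangular]
  · simp
  · intro i r hir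
    simp [Nat.choose_eq_zero_of_lt (show (i : ℕ) < r from hir)]

theorem det_wronskianMatrix_succ_of_eventuallyEq_one {φ : ℕ → ℝ → ℝ} (h : φ 0 =ᶠ[𝓝 x] 1)
    (q : ℕ) : (wronskianMatrix φ (q + 1) x).det =
      (wronskianMatrix (fun j => deriv (φ (j + 1))) q x).det := by
  have hcol : ∀ i : Fin (q + 2), wronskianMatrix φ (q + 1) x i 0 = if (i : ℕ) = 0 then 1 else 0 :=
    fun i => by simp [wronskianMatrix, h.iteratedDeriv_eq, Pi.one_def, iteratedDeriv_const]
  rw [Matrix.det_succ_column_zero, Finset.sum_eq_single 0 (fun i _ hi => by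
    simp [hcol, hi]) (by simp)]
  simp only [hcol, Fin.val_zero, pow_zero, if_true, one_mul, Fin.succAbove_zero]
  congr 1
  ext i j
  simp [wronskianMatrix, iteratedDeriv_succ']

theorem det_wronskianMatrix_succ {g : ℕ → ℝ → ℝ} (hg : ∀ j, ContDiffAt ℝ ∞ (g j) x)
    (hg0 : g 0 x ≠ 0) (q : ℕ) :
    (wronskianMatrix g (q + 1) x).det = g 0 x ^ (q + 2) *
      (wronskianMatrix (fun j => deriv fun y => g (j + 1) y / g 0 y) q x).det := by
  have hne : ∀ᶠ y in 𝓝 x, g 0 y ≠ 0 := (hg 0).continuousAt.eventually_ne hg0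
  have heq : wronskianMatrix g (q + 1) x =
      wronskianMatrix (fun j y => g j y / g 0 y * g 0 y) (q + 1) x := by
    ext i j
    exact Filter.EventuallyEq.iteratedDeriv_eq _ (hne.mono fun y hy => (div_mul_cancel₀ _ hy).symm)
  rw [heq, det_wronskianMatrix_mul (φ := fun j y => g j y / g 0 y)
    (fun j => (hg j).div (hg 0) hg0) (hg 0),
    det_wronskianMatrix_succ_of_eventuallyEq_one (hne.mono fun y hy => div_self hy)]

end Wronskian

theorem eqOn_deriv_sum_mul_div {N : ℕ} {U : Set ℝ} (hU : IsOpen U) {g : ℕ → ℝ → ℝ}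
    (hg : ∀ j, ContDiffOn ℝ ∞ (g j) U) (hg0 : ∀ y ∈ U, g 0 y ≠ 0) (γ : Fin (N + 2) → ℝ) :
    Set.EqOn (deriv fun y => ∑ i, γ i * (g i y / g 0 y))
      (fun y => ∑ i : Fin (N + 1), γ i.succ * deriv (fun z => g (i + 1) z / g 0 z) y) U := by
  intro y hy
  have hdiff : ∀ j, DifferentiableAt ℝ (fun z => g j z / g 0 z) y := fun j =>
    ((hg j).div (hg 0) hg0 |>.contDiffAt (hU.mem_nhds hy)).differentiableAt (by simp)
  have hconst : deriv (fun z => g 0 z / g 0 z) y = 0 := by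
    rw [Filter.EventuallyEq.deriv_eq (f := fun _ => (1 : ℝ))
      (Filter.eventually_of_mem (hU.mem_nhds hy) fun z hz => div_self (hg0 z hz))]
    simp
  rw [deriv_fun_sum fun (i : Fin (N + 2)) _ => (hdiff i).const_mul (γ i), Fin.sum_univ_succ]
  simp [deriv_const_mul _ (hdiff _), hconst]

theorem HasZerosWithMult.exists_derived_system {N : ℕ} {U I : Set ℝ} (hU : IsOpen U)
    (hI : I.OrdConnected) (hIU : I ⊆ U) {g : ℕ → ℝ → ℝ} (hg : ∀ j, ContDiffOn ℝ ∞ (g j) U)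
    (hg0 : ∀ y ∈ U, g 0 y ≠ 0) {γ : Fin (N + 2) → ℝ} {s : Finset ℝ} {m : ℝ → ℕ} (hs : ↑s ⊆ I)
    (h : HasZerosWithMult (fun y => ∑ i, γ i * g i y) s m) :
    ∃ (s' : Finset ℝ) (m' : ℝ → ℕ), ↑s' ⊆ I ∧
      HasZerosWithMult (fun y => ∑ i : Fin (N + 1), γ i.succ *
        deriv (fun z => g (i + 1) z / g 0 z) y) s' m' ∧
      ∑ x ∈ s, m x ≤ ∑ x ∈ s', m' x + 1 := by
  set ψ := fun y => ∑ i, γ i * (g i y / g 0 y)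
  have hψ : ContDiffOn ℝ ∞ ψ U :=
    ContDiffOn.sum fun i _ => contDiffOn_const.mul ((hg i).div (hg 0) hg0)
  have hψzeros : HasZerosWithMult ψ s m := h.of_mul hU (hs.trans hIU) hψ (hg 0) hg0
    fun y hy => by simp only [ψ, Finset.sum_mul, mul_assoc, div_mul_cancel₀ _ (hg0 y hy)]
  obtain ⟨s', m', hs', hψ', hsum⟩ := hψzeros.exists_deriv hI (hψ.continuousOn.mono hIU) hs
  refine ⟨s', m', hs', fun x hx j hj => ?_, hsum⟩
  rw [← (eqOn_deriv_sum_mul_div hU hg hg0 γ).iteratedDeriv_of_isOpen hU j (hIU (hs' hx))]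
  exact hψ' x hx j hj

theorem HasZerosWithMult.sum_le_of_det_wronskianMatrix_ne_zero :
    ∀ (N : ℕ) {U I : Set ℝ} {g : ℕ → ℝ → ℝ}, IsOpen U → I.OrdConnected → I ⊆ U →
      (∀ j, ContDiffOn ℝ ∞ (g j) U) → (∀ q ≤ N, ∀ x ∈ I, (wronskianMatrix g q x).det ≠ 0) →
      ∀ {γ : Fin (N + 1) → ℝ}, γ ≠ 0 → ∀ {s : Finset ℝ} {m : ℝ → ℕ}, ↑s ⊆ I →
      HasZerosWithMult (fun y => ∑ i, γ i * g i y) s m → ∑ x ∈ s, m x ≤ N := by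
  intro N
  induction N with
  | zero =>
    intro U I g _ _ _ _ hW γ hγ s m hs h
    have hγ0 : γ 0 ≠ 0 := fun h0 => hγ (funext (Fin.cases h0 fun i => i.elim0))
    refine (h.sum_eq_zero fun x hx => ?_).le
    have hW0 := hW 0 le_rfl x (hs hx)
    rw [det_wronskianMatrix_zero] at hW0
    simpa [hγ0] using hW0
  | succ N ih =>
    intro U I g hU hI hIU hg hW γ hγ s m hs h
    have hg0 : ∀ x ∈ I, g 0 x ≠ 0 := fun x hx =>
      det_wronskianMatrix_zero g x ▸ hW 0 (Nat.zero_le _) x hx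
    by_cases htail : (fun i : Fin (N + 1) => γ i.succ) = 0
    · have hγ0 : γ 0 ≠ 0 := fun h0 => hγ (funext fun i => Fin.cases h0 (congrFun htail) i)
      refine (h.sum_eq_zero fun x hx => ?_).le.trans (Nat.zero_le _)
      simpa [Fin.sum_univ_succ, congrFun htail, hγ0] using hg0 x (hs hx)
    set U' := U ∩ g 0 ⁻¹' {0}ᶜ
    have hU' : IsOpen U' := (hg 0).continuousOn.isOpen_inter_preimage hU isOpen_compl_singleton
    have hIU' : I ⊆ U' := fun x hx => ⟨hIU hx, hg0 x hx⟩
    have hg' : ∀ j, ContDiffOn ℝ ∞ (g j) U' := fun j => (hg j).mono Set.inter_subset_left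
    obtain ⟨s', m', hs', h', hsum⟩ :=
      h.exists_derived_system hU' hI hIU' hg' (fun y hy => hy.2) hs
    have hW' : ∀ q ≤ N, ∀ x ∈ I,
        (wronskianMatrix (fun j => deriv fun y => g (j + 1) y / g 0 y) q x).det ≠ 0 :=
      fun q hq x hx => by
        have := hW (q + 1) (by omega) x hx
        rw [det_wronskianMatrix_succ (fun j => (hg' j).contDiffAt (hU'.mem_nhds (hIU' hx)))
          (hg0 x hx)] at this
        exact right_ne_zero_of_mul this
    have := ih hU' hI hIU' (fun j => ((hg' (j + 1)).div (hg' 0) fun y hy => hy.2).deriv_of_isOpen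
      hU' (by simp)) hW' htail hs' h'
    omega

theorem Matrix.det_hankel_ne_zero {R : Type*} [CommRing R] [IsDomain R] {k : ℕ} (ψ : ℕ → R)
    (hlt : ∀ m < k, ψ m = 0) (hk : ψ k ≠ 0) :
    (Matrix.of fun i j : Fin (k + 1) => ψ (i + j)).det ≠ 0 := by
  set H := Matrix.of fun i j : Fin (k + 1) => ψ (i + j)
  -- reversing the columns makes `H` lower triangular with `ψ k` on the diagonal
  have hrev : ∀ q : Fin (k + 1), (Fin.revPerm q : ℕ) = k - q := fun q => by
    simp [Fin.val_rev]
  have hlower : (H.submatrix id Fin.revPerm).IsLowerTriangular := fun p q hpq => by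
    have : (p : ℕ) < q := hpq
    simp only [Matrix.submatrix_apply, id, H, Matrix.of_apply, hrev]
    exact hlt _ (by omega)
  have hdet : (H.submatrix id Fin.revPerm).det = ψ k ^ (k + 1) := by
    rw [Matrix.det_of_isLowerTriangular _ hlower]
    simp only [Matrix.submatrix_apply, id, H, Matrix.of_apply, hrev]
    have hdiag : ∀ p : Fin (k + 1), (p : ℕ) + (k - p) = k := fun p => by have := p.is_le; omega
    simp [hdiag]
  rw [Matrix.det_permute'] at hdet
  intro h
  rw [h, mul_zero] at hdet
  exact pow_ne_zero _ hk hdet.symm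

section ExpPoly

theorem ContDiff.deriv_sub_const_mul {f : ℝ → ℂ} (hf : ContDiff ℝ ∞ f) (c : ℂ) :
    ContDiff ℝ ∞ (fun x => deriv f x - c * f x) :=
  (contDiff_infty_iff_deriv.mp hf).2.sub (contDiff_const.mul hf)

theorem LOp_zero : ∀ l : List ℂ, LOp l 0 = 0
  | [] => rfl
  | c :: r => by
    have hstep : (fun x => deriv (0 : ℝ → ℂ) x - c * (0 : ℝ → ℂ) x) = 0 := by funext x; simp
    simp only [LOp, hstep]
    exact LOp_zero r

theorem LOp_add : ∀ (l : List ℂ) {f g : ℝ → ℂ}, ContDiff ℝ ∞ f → ContDiff ℝ ∞ g →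
    LOp l (f + g) = LOp l f + LOp l g
  | [], _, _, _, _ => rfl
  | c :: r, f, g, hf, hg => by
    have hstep : (fun x => deriv (f + g) x - c * (f + g) x) =
        (fun x => deriv f x - c * f x) + (fun x => deriv g x - c * g x) := by
      funext x
      simp only [Pi.add_apply, deriv_add (hf.differentiable (by simp) x)
        (hg.differentiable (by simp) x)]
      ring
    simp only [LOp, hstep]
    exact LOp_add r (hf.deriv_sub_const_mul c) (hg.deriv_sub_const_mul c)

theorem LOp_const_smul : ∀ (l : List ℂ) (a : ℂ) {f : ℝ → ℂ}, ContDiff ℝ ∞ f →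
    LOp l (a • f) = a • LOp l f
  | [], _, _, _ => rfl
  | c :: r, a, f, hf => by
    have hstep : (fun x => deriv (a • f) x - c * (a • f) x) =
        a • (fun x => deriv f x - c * f x) := by
      funext x
      simp only [Pi.smul_apply, smul_eq_mul, deriv_const_smul_field a (f := f) (x := x)]
      ring
    simp only [LOp, hstep]
    exact LOp_const_smul r a (hf.deriv_sub_const_mul c)

theorem LOp_deriv : ∀ (l : List ℂ) {f : ℝ → ℂ}, ContDiff ℝ ∞ f →
    LOp l (deriv f) = deriv (LOp l f)
  | [], _, _ => rfl
  | c :: r, f, hf => by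
    have hstep : (fun x => deriv (deriv f) x - c * deriv f x) =
        deriv (fun x => deriv f x - c * f x) := by
      funext x
      rw [deriv_fun_sub ((contDiff_infty_iff_deriv.mp hf).2.differentiable (by simp) x)
        ((contDiff_const.mul hf).differentiable (by simp) x),
        deriv_const_mul c (hf.differentiable (by simp) x)]
    simp only [LOp, hstep]
    exact LOp_deriv r (hf.deriv_sub_const_mul c)

theorem LOp_comp_sub_const : ∀ (l : List ℂ) (f : ℝ → ℂ) (a : ℝ),
    LOp l (fun x => f (x - a)) = fun x => LOp l f (x - a)
  | [], _, _ => rfl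
  | c :: r, f, a => by
    simp only [LOp, deriv_comp_sub_const]
    exact LOp_comp_sub_const r (fun x => deriv f x - c * f x) a

def expPolySubmodule (l : List ℂ) : Submodule ℂ (ℝ → ℂ) where
  carrier := ExpPoly l
  zero_mem' := ⟨contDiff_const, LOp_zero l⟩
  add_mem' := fun hf hg => ⟨hf.1.add hg.1, by rw [LOp_add l hf.1 hg.1, hf.2, hg.2, add_zero]⟩
  smul_mem' := fun a _ hf => ⟨hf.1.const_smul a, by rw [LOp_const_smul l a hf.1, hf.2, smul_zero]⟩

variable {l : List ℂ} {f : ℝ → ℂ}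

theorem ExpPoly.deriv_mem (hf : f ∈ ExpPoly l) : deriv f ∈ ExpPoly l :=
  ⟨(contDiff_infty_iff_deriv.mp hf.1).2, by rw [LOp_deriv l hf.1, hf.2]; simp⟩

theorem ExpPoly.iteratedDeriv_mem (hf : f ∈ ExpPoly l) (i : ℕ) : iteratedDeriv i f ∈ ExpPoly l := by
  induction i with
  | zero => simpa using hf
  | succ i ih => simpa only [iteratedDeriv_succ] using ExpPoly.deriv_mem ih

theorem ExpPoly.comp_sub_const_mem (hf : f ∈ ExpPoly l) (a : ℝ) :
    (fun x => f (x - a)) ∈ ExpPoly l :=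
  ⟨hf.1.comp (contDiff_id.sub contDiff_const), by rw [LOp_comp_sub_const, hf.2]; rfl⟩

theorem eq_zero_of_deriv_eq_const_mul {f : ℝ → ℂ} (hf : Differentiable ℝ f) {c : ℂ}
    (hd : ∀ x, deriv f x = c * f x) {x₀ : ℝ} (h₀ : f x₀ = 0) : f = 0 := by
  -- `exp (-c x) f x` has derivative zero
  have hconst : ∀ x, HasDerivAt (fun y : ℝ => Complex.exp (-(c * y)) * f y) 0 x := by
    intro x
    have hexp : HasDerivAt (fun y : ℝ => Complex.exp (-(c * y))) (Complex.exp (-(c * x)) * -c) x :=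
      (((Complex.ofRealCLM.hasDerivAt (x := x)).const_mul c).neg.cexp).congr_deriv (by simp)
    exact (hexp.mul (hf x).hasDerivAt).congr_deriv (by rw [hd x]; ring)
  funext x
  have := is_const_of_deriv_eq_zero (fun y => (hconst y).differentiableAt)
    (fun y => (hconst y).deriv) x x₀
  simpa [h₀, Complex.exp_ne_zero] using this

theorem ExpPoly.eq_zero_of_iteratedDeriv_eq_zero :
    ∀ {l : List ℂ} {f : ℝ → ℂ}, f ∈ ExpPoly l → ∀ {x₀ : ℝ},
      (∀ j < l.length, iteratedDeriv j f x₀ = 0) → f = 0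
  | [], _, hf, _, _ => hf.2
  | c :: r, f, hf, x₀, h => by
    have hg : (fun x => deriv f x - c * f x) ∈ ExpPoly r := ⟨hf.1.deriv_sub_const_mul c, hf.2⟩
    have hg0 := ExpPoly.eq_zero_of_iteratedDeriv_eq_zero hg (x₀ := x₀) fun j hj => by
      rw [iteratedDeriv_fun_sub ((contDiff_infty_iff_deriv.mp hf.1).2.contDiffAt.of_le
          (mod_cast le_top)) ((contDiff_const.mul hf.1).contDiffAt.of_le (mod_cast le_top)),
        iteratedDeriv_const_mul_field, ← iteratedDeriv_succ', h (j + 1) (by simpa using hj),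
        h j (by simp; omega)]
      simp
    refine eq_zero_of_deriv_eq_const_mul (hf.1.differentiable (by simp)) (c := c)
      (fun x => sub_eq_zero.mp (congrFun hg0 x)) (x₀ := x₀) (by simpa using h 0 (by simp))

end ExpPoly

/-- The matrix whose determinant is `Φ_{n,k}(t)` when `f = Φ_n`. -/
def derivHankel {𝕜 : Type*} [NormedField 𝕜] [NormedAlgebra ℝ 𝕜] (f : ℝ → 𝕜) (k : ℕ) (t : ℝ) :
    Matrix (Fin (k + 1)) (Fin (k + 1)) 𝕜 :=
  Matrix.of fun i j => iteratedDeriv (i + j) f t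

def derivCombo (Φ : ℝ → ℂ) (a : ℝ) {k : ℕ} (c : Fin (k + 1) → ℂ) : ℝ → ℂ :=
  fun y => ∑ j, c j * iteratedDeriv j Φ (y - a)

section DerivCombo

variable {Φ : ℝ → ℂ} {a : ℝ} {k : ℕ} {c : Fin (k + 1) → ℂ}

theorem iteratedDeriv_derivCombo (hΦ : ContDiff ℝ ∞ Φ) (m : ℕ) :
    iteratedDeriv m (derivCombo Φ a c) = derivCombo (iteratedDeriv m Φ) a c := by
  funext x
  unfold derivCombo
  rw [iteratedDeriv_fun_sum_mul (g := fun (j : Fin (k + 1)) y => iteratedDeriv j Φ (y - a))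
    fun j _ => (hΦ.iteratedDeriv j).comp (contDiff_id.sub contDiff_const)]
  simp [iteratedDeriv_comp_sub_const, iteratedDeriv_iteratedDeriv, add_comm]

theorem iteratedDeriv_derivCombo_eq_mulVec (hΦ : ContDiff ℝ ∞ Φ) (x : ℝ) (i : Fin (k + 1)) :
    iteratedDeriv i (derivCombo Φ a c) x = (derivHankel Φ k (x - a) *ᵥ c) i := by
  simp [iteratedDeriv_derivCombo hΦ, derivCombo, derivHankel, Matrix.mulVec, dotProduct,
    iteratedDeriv_iteratedDeriv, mul_comm, add_comm]

end DerivCombo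

section RealFundamental

variable {φ : ℝ → ℝ}

theorem iteratedDeriv_ofReal_comp (hφ : ContDiff ℝ ∞ φ) (i : ℕ) :
    iteratedDeriv i (fun t => (φ t : ℂ)) = fun t => ((iteratedDeriv i φ t : ℝ) : ℂ) :=
  Complex.ofRealCLM.iteratedDeriv_comp_left hφ i

theorem det_derivHankel_ofReal (hφ : ContDiff ℝ ∞ φ) (k : ℕ) (t : ℝ) :
    (derivHankel (fun t => (φ t : ℂ)) k t).det = (derivHankel φ k t).det := by
  rw [show ((derivHankel φ k t).det : ℂ) = Complex.ofRealHom (derivHankel φ k t).det from rfl,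
    RingHom.map_det]
  congr 1
  ext i j
  simp [derivHankel, iteratedDeriv_ofReal_comp hφ]

theorem wronskianMatrix_iteratedDeriv_comp_sub_const (a : ℝ) (k : ℕ) (x : ℝ) :
    wronskianMatrix (fun j y => iteratedDeriv j φ (y - a)) k x = derivHankel φ k (x - a) := by
  ext i j
  simp [wronskianMatrix, derivHankel, iteratedDeriv_comp_sub_const, iteratedDeriv_iteratedDeriv]

theorem HasZerosWithMult.sum_le_of_derivCombo_ofReal (hφ : ContDiff ℝ ∞ φ) {I : Set ℝ}
    (hI : I.OrdConnected) {a : ℝ} {k : ℕ}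
    (hdet : ∀ q ≤ k, ∀ x ∈ I, (derivHankel φ q (x - a)).det ≠ 0) {c : Fin (k + 1) → ℂ}
    (hc : c ≠ 0) {s : Finset ℝ} {m : ℝ → ℕ} (hs : ↑s ⊆ I)
    (h : HasZerosWithMult (derivCombo (fun t => (φ t : ℂ)) a c) s m) : ∑ x ∈ s, m x ≤ k := by
  have hsmooth : ContDiff ℝ ∞ (derivCombo (fun t => (φ t : ℂ)) a c) :=
    ContDiff.sum fun i _ => contDiff_const.mul <|
      ((Complex.ofRealCLM.contDiff.comp hφ).iteratedDeriv i).comp (contDiff_id.sub contDiff_const)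
  have hparts (L : ℂ →L[ℝ] ℝ) (hL : ∀ z (r : ℝ), L (z * r) = L z * r) :
      (L ∘ derivCombo (fun t => (φ t : ℂ)) a c) =
        fun y => ∑ j, L (c j) * iteratedDeriv j φ (y - a) := by
    funext y
    simp [derivCombo, iteratedDeriv_ofReal_comp hφ, hL]
  have hbound (L : ℂ →L[ℝ] ℝ) (hL : ∀ z (r : ℝ), L (z * r) = L z * r)
      (hLc : (fun j => L (c j)) ≠ 0) : ∑ x ∈ s, m x ≤ k := by
    refine HasZerosWithMult.sum_le_of_det_wronskianMatrix_ne_zero k isOpen_univ hI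
      (Set.subset_univ I) (g := fun j y => iteratedDeriv j φ (y - a))
      (fun j => ((hφ.iteratedDeriv j).comp (contDiff_id.sub contDiff_const)).contDiffOn)
      (fun q hq x hx => ?_) hLc hs (hparts L hL ▸ h.comp_clm L hsmooth)
    rw [wronskianMatrix_iteratedDeriv_comp_sub_const]
    exact hdet q hq x hx
  obtain ⟨i, hi⟩ := Function.ne_iff.mp hc
  by_cases hre : (c i).re = 0
  · exact hbound Complex.imCLM (by simp) (Function.ne_iff.mpr ⟨i, by
      simpa using fun him => hi (Complex.ext hre him)⟩)
  · exact hbound Complex.reCLM (by simp) (Function.ne_iff.mpr ⟨i, by simpa using hre⟩)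

end RealFundamental

theorem IsExtChebyshev.mono {l : List ℂ} {A B : Set ℝ} (h : IsExtChebyshev l B) (hAB : A ⊆ B) :
    IsExtChebyshev l A :=
  fun f hf hne s m hs => h f hf hne s m (hs.trans hAB)

theorem isExtChebyshev_pair_iff {l : List ℂ} {n : ℕ} (hl : l.length = n + 1) {a x : ℝ}
    (hax : a ≠ x) :
    IsExtChebyshev l {a, x} ↔ ∀ f ∈ ExpPoly l, ∀ p q : ℕ, n < p + q →
      (∀ j < p, iteratedDeriv j f a = 0) → (∀ j < q, iteratedDeriv j f x = 0) → f = 0 := by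
  classical
  constructor
  · intro h f hf p q hpq hp hq
    by_contra hne
    have hcount := h f hf hne {a, x} (fun y => if y = a then p else q) (by simp)
      (by simpa [hax.symm] using And.intro hp hq)
    simp [Finset.sum_pair hax, hax.symm, hl] at hcount
    omega
  · intro h f hf hne s m hs hv
    have hsum : ∑ y ∈ s, m y = (if a ∈ s then m a else 0) + (if x ∈ s then m x else 0) := by
      rw [← Finset.sum_pair hax (f := fun y => if y ∈ s then m y else 0), Finset.sum_ite_mem,
        Finset.inter_eq_right.mpr (by rwa [← Finset.coe_subset, Finset.coe_pair])]
    by_contra hlt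
    exact hne (h f hf _ _ (by rw [hl] at hlt; omega) (HasZerosWithMult.ite_mem hv a)
      (HasZerosWithMult.ite_mem hv x))

/-- `Φ` is the fundamental function `Φ_n` of `E_Λ`. -/
structure IsFundamental (l : List ℂ) (n : ℕ) (Φ : ℝ → ℂ) : Prop where
  length_eq : l.length = n + 1
  mem : Φ ∈ ExpPoly l
  iteratedDeriv_eq_zero : ∀ j < n, iteratedDeriv j Φ 0 = 0
  iteratedDeriv_self : iteratedDeriv n Φ 0 = 1

namespace IsFundamental

variable {l : List ℂ} {n : ℕ} {Φ : ℝ → ℂ} {a : ℝ} {k : ℕ} {c : Fin (k + 1) → ℂ}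

theorem derivCombo_mem (hΦ : IsFundamental l n Φ) : derivCombo Φ a c ∈ ExpPoly l := by
  have : derivCombo Φ a c = ∑ j, c j • fun y => iteratedDeriv j Φ (y - a) := by
    funext y; simp [derivCombo]
  rw [this]
  exact Submodule.sum_mem (expPolySubmodule l) fun j _ =>
    Submodule.smul_mem _ _ (ExpPoly.comp_sub_const_mem (ExpPoly.iteratedDeriv_mem hΦ.mem j) a)

theorem iteratedDeriv_derivCombo_self_of_lt (hΦ : IsFundamental l n Φ) (hk : k ≤ n) {i : ℕ}
    (hi : i < n - k) : iteratedDeriv i (derivCombo Φ a c) a = 0 := by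
  rw [iteratedDeriv_derivCombo hΦ.mem.1]
  refine Finset.sum_eq_zero fun j _ => ?_
  rw [sub_self, iteratedDeriv_iteratedDeriv, hΦ.iteratedDeriv_eq_zero _ (by omega), mul_zero]

theorem iteratedDeriv_derivCombo_self (hΦ : IsFundamental l n Φ) (i : Fin (k + 1)) :
    iteratedDeriv (i + (n - k)) (derivCombo Φ a c) a =
      (derivHankel (iteratedDeriv (n - k) Φ) k 0 *ᵥ c) i := by
  rw [← iteratedDeriv_iteratedDeriv, iteratedDeriv_derivCombo hΦ.mem.1,
    iteratedDeriv_derivCombo_eq_mulVec (hΦ.mem.1.iteratedDeriv _), sub_self]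

theorem det_derivHankel_zero_ne_zero (hΦ : IsFundamental l n Φ) (hk : k ≤ n) :
    (derivHankel (iteratedDeriv (n - k) Φ) k 0).det ≠ 0 :=
  Matrix.det_hankel_ne_zero (fun m => iteratedDeriv m (iteratedDeriv (n - k) Φ) 0)
    (fun m hm => by rw [iteratedDeriv_iteratedDeriv, hΦ.iteratedDeriv_eq_zero _ (by omega)])
    (by rw [iteratedDeriv_iteratedDeriv, Nat.add_sub_cancel' hk, hΦ.iteratedDeriv_self]; simp)

theorem eq_zero_of_derivCombo_eq_zero (hΦ : IsFundamental l n Φ) (hk : k ≤ n)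
    (h : derivCombo Φ a c = 0) : c = 0 :=
  Matrix.eq_zero_of_mulVec_eq_zero (hΦ.det_derivHankel_zero_ne_zero hk) <| funext fun i => by
    rw [← hΦ.iteratedDeriv_derivCombo_self, h]
    simp

theorem exists_derivCombo_eq (hΦ : IsFundamental l n Φ) (hk : k ≤ n) {f : ℝ → ℂ}
    (hf : f ∈ ExpPoly l) (h₀ : ∀ j < n - k, iteratedDeriv j f a = 0) :
    ∃ c : Fin (k + 1) → ℂ, f = derivCombo Φ a c := by
  obtain ⟨c, hc⟩ := Matrix.mulVec_surjective_iff_isUnit.mpr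
    ((Matrix.isUnit_iff_isUnit_det _).mpr (hΦ.det_derivHankel_zero_ne_zero hk).isUnit)
    fun i : Fin (k + 1) => iteratedDeriv (i + (n - k)) f a
  refine ⟨c, sub_eq_zero.mp <| ExpPoly.eq_zero_of_iteratedDeriv_eq_zero (x₀ := a)
    ((expPolySubmodule l).sub_mem hf hΦ.derivCombo_mem) fun j hj => ?_⟩
  rw [iteratedDeriv_sub (hf.1.contDiffAt.of_le (mod_cast le_top))
    (hΦ.derivCombo_mem.1.contDiffAt.of_le (mod_cast le_top))]
  rcases lt_or_ge j (n - k) with hj' | hj'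
  · rw [h₀ j hj', hΦ.iteratedDeriv_derivCombo_self_of_lt hk hj', sub_zero]
  · have hjn : j < n + 1 := hΦ.length_eq ▸ hj
    obtain ⟨i, rfl⟩ : ∃ i : Fin (k + 1), j = i + (n - k) :=
      ⟨⟨j - (n - k), by omega⟩, by simp; omega⟩
    rw [hΦ.iteratedDeriv_derivCombo_self, hc, sub_self]

theorem isExtChebyshev_pair_iff_det_ne_zero (hΦ : IsFundamental l n Φ) {x : ℝ} (hax : a ≠ x) :
    IsExtChebyshev l {a, x} ↔ ∀ k ≤ n, (derivHankel Φ k (x - a)).det ≠ 0 := by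
  rw [isExtChebyshev_pair_iff hΦ.length_eq hax]
  constructor
  · intro h k hk hdet
    obtain ⟨c, hc0, hc⟩ := Matrix.exists_mulVec_eq_zero_iff.mpr hdet
    refine hc0 (hΦ.eq_zero_of_derivCombo_eq_zero hk (a := a) ?_)
    refine h _ hΦ.derivCombo_mem (n - k) (k + 1) (by omega)
      (fun j hj => hΦ.iteratedDeriv_derivCombo_self_of_lt hk hj) fun j hj => ?_
    simpa [hc] using
      iteratedDeriv_derivCombo_eq_mulVec hΦ.mem.1 x (⟨j, hj⟩ : Fin (k + 1)) (a := a) (c := c)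
  · intro h f hf p q hpq hp hq
    rcases lt_or_ge n p with hnp | hpn
    · exact ExpPoly.eq_zero_of_iteratedDeriv_eq_zero hf fun j hj =>
        hp j (by rw [hΦ.length_eq] at hj; omega)
    obtain ⟨c, rfl⟩ := hΦ.exists_derivCombo_eq (Nat.sub_le n p) hf (a := a) fun j hj =>
      hp j (by omega)
    have hc : c = 0 := Matrix.eq_zero_of_mulVec_eq_zero (h _ (Nat.sub_le n p)) <| funext fun i => by
      rw [← iteratedDeriv_derivCombo_eq_mulVec hΦ.mem.1, hq i (by omega)]
      rfl
    subst hc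
    funext y
    simp [derivCombo]

theorem conj_comp_eq (hΦ : IsFundamental l n Φ) (hconj : ConjClosed l) :
    (fun t => starRingEnd ℂ (Φ t)) = Φ := by
  have hconjΦ := hconj Φ hΦ.mem
  refine sub_eq_zero.mp <| ExpPoly.eq_zero_of_iteratedDeriv_eq_zero (x₀ := 0)
    ((expPolySubmodule l).sub_mem hconjΦ hΦ.mem) fun j hj => ?_
  rw [iteratedDeriv_sub (hconjΦ.1.contDiffAt.of_le (mod_cast le_top))
    (hΦ.mem.1.contDiffAt.of_le (mod_cast le_top)),
    show (fun t => starRingEnd ℂ (Φ t)) = Complex.conjCLE.toContinuousLinearMap ∘ Φ from rfl,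
    ContinuousLinearMap.iteratedDeriv_comp_left _ hΦ.mem.1]
  rw [hΦ.length_eq] at hj
  rcases (Nat.lt_succ_iff.mp hj).lt_or_eq with hj | rfl
  · simp [hΦ.iteratedDeriv_eq_zero j hj]
  · simp [hΦ.iteratedDeriv_self]

theorem exists_ofReal_eq (hΦ : IsFundamental l n Φ) (hconj : ConjClosed l) :
    ∃ φ : ℝ → ℝ, ContDiff ℝ ∞ φ ∧ Φ = fun t => (φ t : ℂ) :=
  ⟨fun t => (Φ t).re, Complex.reCLM.contDiff.comp hΦ.mem.1,
    funext fun t => (Complex.conj_eq_iff_re.mp (congrFun (hΦ.conj_comp_eq hconj) t)).symm⟩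

theorem isExtChebyshev_Icc (hΦ : IsFundamental l n Φ) (hconj : ConjClosed l) {b : ℝ}
    (hdet : ∀ k ≤ n, ∀ x ∈ Set.Ioc a b, (derivHankel Φ k (x - a)).det ≠ 0) :
    IsExtChebyshev l (Set.Icc a b) := by
  classical
  intro f hf hne s m hs h
  rw [hΦ.length_eq, Nat.add_sub_cancel]
  set p := if a ∈ s then m a else 0
  have hsum : ∑ x ∈ s, m x = p + ∑ x ∈ s.erase a, m x := by
    by_cases ha : a ∈ s
    · simp [p, ha, Finset.add_sum_erase]
    · simp [p, ha, Finset.erase_eq_of_notMem]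
  have hpn : p ≤ n := by
    by_contra! hnp
    exact hne <| ExpPoly.eq_zero_of_iteratedDeriv_eq_zero hf fun j hj =>
      HasZerosWithMult.ite_mem h a j (by rw [hΦ.length_eq] at hj; omega)
  obtain ⟨c, rfl⟩ := hΦ.exists_derivCombo_eq (Nat.sub_le n p) hf fun j hj =>
    HasZerosWithMult.ite_mem h a j (by omega)
  have hc : c ≠ 0 := by
    rintro rfl
    exact hne (funext fun y => by simp [derivCombo])
  obtain ⟨φ, hφ, rfl⟩ := hΦ.exists_ofReal_eq hconj
  have herase : ∑ x ∈ s.erase a, m x ≤ n - p :=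
    HasZerosWithMult.sum_le_of_derivCombo_ofReal hφ Set.ordConnected_Ioc
      (fun q hq x hx => by simpa [det_derivHankel_ofReal hφ] using hdet q (by omega) x hx) hc
      (fun x hx => ⟨lt_of_le_of_ne (hs (Finset.mem_of_mem_erase hx)).1
        (Finset.ne_of_mem_erase hx).symm, (hs (Finset.mem_of_mem_erase hx)).2⟩)
      fun x hx => h x (Finset.mem_of_mem_erase hx)
  omega

end IsFundamental

theorem extChebyshev_interval_characterization_general
    (n : ℕ) (l : List ℂ) (hl : l.length = n + 1)
    (hconj : ConjClosed l)
    (a b : ℝ) (Φ : ℝ → ℂ)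
    (hΦmem : Φ ∈ ExpPoly l)
    (hΦzero : ∀ j < n, iteratedDeriv j Φ 0 = 0)
    (hΦnorm : iteratedDeriv n Φ 0 = 1) :
    (IsExtChebyshev l (Set.Icc a b) ↔ ∀ x ∈ Set.Ioc a b, IsExtChebyshev l {a, x}) ∧
    ((∀ x ∈ Set.Ioc a b, IsExtChebyshev l {a, x}) ↔
      ∀ k ≤ n, ∀ x ∈ Set.Ioc a b,
        Matrix.det (Matrix.of fun i j : Fin (k + 1) =>
          iteratedDeriv ((i : ℕ) + (j : ℕ)) Φ (x - a)) ≠ 0) := by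
  have hΦ : IsFundamental l n Φ := ⟨hl, hΦmem, hΦzero, hΦnorm⟩
  have hpair : (∀ x ∈ Set.Ioc a b, IsExtChebyshev l {a, x}) ↔
      ∀ k ≤ n, ∀ x ∈ Set.Ioc a b, (derivHankel Φ k (x - a)).det ≠ 0 :=
    ⟨fun h k hk x hx => (hΦ.isExtChebyshev_pair_iff_det_ne_zero hx.1.ne).mp (h x hx) k hk,
      fun h x hx => (hΦ.isExtChebyshev_pair_iff_det_ne_zero hx.1.ne).mpr fun k hk => h k hk x hx⟩
  refine ⟨⟨fun h x hx => h.mono ?_, fun h => hΦ.isExtChebyshev_Icc hconj (hpair.mp h)⟩, hpair⟩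
  exact Set.pair_subset ⟨le_rfl, hx.1.le.trans hx.2⟩ (Set.Ioc_subset_Icc_self hx)

/-- **Theorem (extended Chebyshev systems over an interval).**
Let `Λ = (λ_0,…,λ_n) ∈ ℂ^{n+1}`, assume `E_Λ` is closed under complex conjugation,
and let `Φ` be the fundamental function of `E_Λ`.  For real numbers `a < b` the
following are equivalent:
(a) `E_Λ` is an extended Chebyshev system over the interval `[a,b]`;
(b) `E_Λ` is an extended Chebyshev system for every two-point set `{a,x}`, `x ∈ (a,b]`;
(c) for each `k = 0,…,n` the function `x ↦ Φ_{n,k}(x − a)` has no zero in `(a,b]`. -/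
theorem extChebyshev_interval_characterization
    (n : ℕ) (l : List ℂ) (hl : l.length = n + 1)
    (hconj : ConjClosed l)
    (a b : ℝ) (hab : a < b) (Φ : ℝ → ℂ)
    (hΦmem : Φ ∈ ExpPoly l)
    (hΦzero : ∀ j < n, iteratedDeriv j Φ 0 = 0)
    (hΦnorm : iteratedDeriv n Φ 0 = 1) :
    (IsExtChebyshev l (Set.Icc a b) ↔ ∀ x ∈ Set.Ioc a b, IsExtChebyshev l {a, x}) ∧
    ((∀ x ∈ Set.Ioc a b, IsExtChebyshev l {a, x}) ↔
      ∀ k ≤ n, ∀ x ∈ Set.Ioc a b,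
        Matrix.det (Matrix.of fun i j : Fin (k + 1) =>
          iteratedDeriv ((i : ℕ) + (j : ℕ)) Φ (x - a)) ≠ 0) :=
  extChebyshev_interval_characterization_general n l hl hconj a b Φ hΦmem hΦzero hΦnorm
end
end

section
/- Suppose E_{(λ_0,…,λ_n)} and E_{(λ_0,…,λ_{n−1})} are extended Chebyshev systems for {a,b}, a ≠ b ∈ ℝ, and let d_k := lim_{x↑b} (d/dx p_{(λ_0,…,λ_n),k}(x)) / p_{(λ_0,…,λ_{n−1}),k}(x) for k = 0,…,n−1 (these limits exist and are nonzero). Then e^{(x−a)λ_n} = p_{(λ_0,…,λ_n),0}(x) + Σ_{k=1}^{n} (−1)^k d_0⋯d_{k−1} · p_{(λ_0,…,λ_n),k}(x) for all x, and for each k = 1,…,n−1 one has d_0⋯d_{k−1} = (−1)^n e^{(b−a)λ_n} / (p_{(λ_0,…,λ_n),n}(b) · d_k⋯d_{n−1}). -/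
open Filter Topology Set

noncomputable section

/-!
Write `D = d/dx − λₙ` and `q_{-1} = 0`. `D` maps `E_{(λ₀,…,λₙ)}` into `E_{(λ₀,…,λₙ₋₁)}`, and
`D p_k − q_{k−1}` vanishes to order `k` at `a` and `n − 1 − k` at `b`. The Chebyshev property of
`E_{(λ₀,…,λₙ₋₁)}` therefore forces `D p_n = q_{n−1}` and `D p_k = q_{k−1} + e_k q_k` for `k < n`.
Near `b`, `p_k' − e_k q_k` vanishes to higher order than `q_k`, so `e_k = d_k`. These identities
telescope: `D` annihilates `∑ (−1)^k d_0⋯d_{k−1} p_k`, which is therefore a multiple of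
`e^{(x−a)λₙ}`, the multiple being `1` by evaluation at `a`. Evaluating at `b`, where only `p_n`
survives, gives the product formula.
-/

open scoped ContDiff Nat
open Asymptotics Finset

lemma LOp_cons (c : ℂ) (l : List ℂ) (f : ℝ → ℂ) : LOp (c :: l) f = LOp l (LOp [c] f) :=
  rfl

lemma LOp_singleton (c : ℂ) (f : ℝ → ℂ) : LOp [c] f = deriv f - c • f := rfl

lemma ContDiff.LOp_singleton {f : ℝ → ℂ} (hf : ContDiff ℝ ∞ f) (c : ℂ) :
    ContDiff ℝ ∞ (LOp [c] f) :=
  (contDiff_infty_iff_deriv.mp hf).2.sub (contDiff_const.mul hf)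

lemma LOp_singleton_sub {f g : ℝ → ℂ} (hf : Differentiable ℝ f) (hg : Differentiable ℝ g)
    (c : ℂ) : LOp [c] (f - g) = LOp [c] f - LOp [c] g := by
  ext x
  simp only [LOp_singleton, Pi.sub_apply, Pi.smul_apply, deriv_sub (hf x) (hg x), smul_sub]
  ring

lemma LOp_singleton_smul {f : ℝ → ℂ} (hf : Differentiable ℝ f) (c e : ℂ) :
    LOp [c] (e • f) = e • LOp [c] f := by
  ext x
  simp only [LOp_singleton, Pi.sub_apply, Pi.smul_apply, deriv_const_smul e (hf x), smul_eq_mul]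
  ring

lemma LOp_singleton_comm {f : ℝ → ℂ} (hf : ContDiff ℝ ∞ f) (c c' : ℂ) :
    LOp [c] (LOp [c'] f) = LOp [c'] (LOp [c] f) := by
  have hf₁ : Differentiable ℝ f := hf.differentiable (by simp)
  have hf₂ : Differentiable ℝ (deriv f) :=
    (contDiff_infty_iff_deriv.mp hf).2.differentiable (by simp)
  rw [LOp_singleton c' f, LOp_singleton_sub hf₂ (hf₁.const_smul c'), LOp_singleton_smul hf₁,
    LOp_singleton c f, LOp_singleton_sub hf₂ (hf₁.const_smul c), LOp_singleton_smul hf₁]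
  simp only [LOp_singleton]
  module

lemma LOp_sub (l : List ℂ) {f g : ℝ → ℂ} (hf : ContDiff ℝ ∞ f)
    (hg : ContDiff ℝ ∞ g) : LOp l (f - g) = LOp l f - LOp l g := by
  induction l generalizing f g with
  | nil => rfl
  | cons c l ih =>
    rw [LOp_cons, LOp_singleton_sub (hf.differentiable (by simp)) (hg.differentiable (by simp)),
      ih (hf.LOp_singleton c) (hg.LOp_singleton c)]
    rfl

lemma LOp_smul (l : List ℂ) {f : ℝ → ℂ} (hf : ContDiff ℝ ∞ f) (e : ℂ) :
    LOp l (e • f) = e • LOp l f := by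
  induction l generalizing f with
  | nil => rfl
  | cons c l ih =>
    rw [LOp_cons, LOp_singleton_smul (hf.differentiable (by simp)), ih (hf.LOp_singleton c)]
    rfl

lemma LOp_append_singleton (l : List ℂ) (c : ℂ) {f : ℝ → ℂ} (hf : ContDiff ℝ ∞ f) :
    LOp (l ++ [c]) f = LOp l (LOp [c] f) := by
  induction l generalizing f with
  | nil => rfl
  | cons c' l ih =>
    rw [List.cons_append, LOp_cons, ih (hf.LOp_singleton c'), LOp_singleton_comm hf]
    rfl

lemma iteratedDeriv_LOp_singleton {f : ℝ → ℂ} (hf : ContDiff ℝ ∞ f) (c : ℂ) (j : ℕ)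
    (x : ℝ) :
    iteratedDeriv j (LOp [c] f) x = iteratedDeriv (j + 1) f x - c * iteratedDeriv j f x := by
  have hcf : ContDiff ℝ ∞ (c • f) := hf.const_smul c
  rw [LOp_singleton, iteratedDeriv_sub
      (contDiff_infty.mp (contDiff_infty_iff_deriv.mp hf).2 j).contDiffAt
      (contDiff_infty.mp hcf j).contDiffAt,
    iteratedDeriv_const_smul_field, iteratedDeriv_succ', smul_eq_mul]

namespace ExpPoly

variable {l : List ℂ} {f g : ℝ → ℂ}

lemma sub_mem (hf : f ∈ ExpPoly l) (hg : g ∈ ExpPoly l) : f - g ∈ ExpPoly l :=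
  ⟨hf.1.sub hg.1, by rw [LOp_sub l hf.1 hg.1, hf.2, hg.2, sub_zero]⟩

lemma smul_mem (hf : f ∈ ExpPoly l) (e : ℂ) : e • f ∈ ExpPoly l :=
  ⟨hf.1.const_smul e, by rw [LOp_smul l hf.1, hf.2, smul_zero]⟩

lemma zero_mem (l : List ℂ) : (0 : ℝ → ℂ) ∈ ExpPoly l :=
  ⟨contDiff_const, by simpa using LOp_smul l (f := 0) contDiff_const 0⟩

lemma LOp_singleton_mem {c : ℂ} (hf : f ∈ ExpPoly (l ++ [c])) : LOp [c] f ∈ ExpPoly l :=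
  ⟨hf.1.LOp_singleton c, by rw [← LOp_append_singleton l c hf.1, hf.2]⟩

lemma iteratedDeriv_sub {l' : List ℂ} (hf : f ∈ ExpPoly l) (hg : g ∈ ExpPoly l') (j : ℕ)
    (x : ℝ) : iteratedDeriv j (f - g) x = iteratedDeriv j f x - iteratedDeriv j g x :=
  _root_.iteratedDeriv_sub (contDiff_infty.mp hf.1 j).contDiffAt
    (contDiff_infty.mp hg.1 j).contDiffAt

end ExpPoly

lemma IsExtChebyshev.eq_zero {l : List ℂ} {a b : ℝ} (hab : a ≠ b)
    (hl : IsExtChebyshev l {a, b}) {r : ℝ → ℂ} (hr : r ∈ ExpPoly l) {A B : ℕ}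
    (hAB : l.length ≤ A + B) (ha : ∀ j < A, iteratedDeriv j r a = 0)
    (hb : ∀ j < B, iteratedDeriv j r b = 0) : r = 0 := by
  obtain rfl | hne := eq_or_ne l []
  · exact hr.2
  by_contra hr0
  have hsum := hl r hr hr0 {a, b} (fun x => if x = a then A else B) (by simp)
    (by simpa [hab.symm] using And.intro ha hb)
  rw [sum_pair hab, if_pos rfl, if_neg hab.symm] at hsum
  have := List.length_pos_iff.mpr hne
  omega

lemma taylor_isLittleO_of_iteratedDeriv_eq_zero {E : Type*} [NormedAddCommGroup E]
    [NormedSpace ℝ E] {f : ℝ → E} {b : ℝ} {m : ℕ} (hf : ContDiff ℝ m f)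
    (h : ∀ j < m, iteratedDeriv j f b = 0) :
    (fun x => f x - ((m ! : ℝ)⁻¹ * (x - b) ^ m) • iteratedDeriv m f b) =o[𝓝 b]
      fun x => (x - b) ^ m := by
  convert taylor_isLittleO_univ (x₀ := b) hf using 3 with x
  rw [taylor_within_apply, sum_range_succ, sum_eq_zero, zero_add,
    iteratedDerivWithin_univ]
  intro j hj
  rw [iteratedDerivWithin_univ, h j (mem_range.mp hj), smul_zero]

lemma isBigO_pow_of_hasZeroOfOrder {ψ : ℝ → ℂ} {b : ℝ} {m : ℕ} (hψ : ContDiff ℝ m ψ)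
    (h : HasZeroOfOrder ψ b m) :
    (fun x => (x - b) ^ m) =O[𝓝 b] ψ := by
  have hC : ‖iteratedDeriv m ψ b‖ ≠ 0 := norm_ne_zero_iff.mpr h.2
  have hmain : (fun x => (x - b) ^ m) =O[𝓝 b]
      fun x => ((m ! : ℝ)⁻¹ * (x - b) ^ m) • iteratedDeriv m ψ b := by
    refine IsBigO.of_bound (m ! / ‖iteratedDeriv m ψ b‖) (Eventually.of_forall fun x => ?_)
    rw [norm_smul, norm_mul, norm_inv, Real.norm_natCast]
    field_simp
    exact le_rfl
  have := ((taylor_isLittleO_of_iteratedDeriv_eq_zero hψ h.1).trans_isBigO hmain).right_isBigO_add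
  simpa using hmain.trans this

lemma tendsto_div_of_iteratedDeriv_eq_mul {w ψ : ℝ → ℂ} {b : ℝ} {m : ℕ} {e : ℂ}
    (hw : ContDiff ℝ m w) (hψ : ContDiff ℝ m ψ) (hψb : HasZeroOfOrder ψ b m)
    (hwψ : ∀ j ≤ m, iteratedDeriv j w b = e * iteratedDeriv j ψ b) :
    Tendsto (fun x => w x / ψ x) (𝓝[≠] b) (𝓝 e) := by
  have hpow := isBigO_pow_of_hasZeroOfOrder hψ hψb
  have hu : (w - e • ψ) =o[𝓝 b] ψ := by
    have heψ : ContDiff ℝ m (e • ψ) := hψ.const_smul e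
    have hdiff : ∀ j ≤ m, iteratedDeriv j (w - e • ψ) b = 0 := fun j hj => by
      rw [iteratedDeriv_sub (hw.of_le (mod_cast hj)).contDiffAt
        (heψ.of_le (mod_cast hj)).contDiffAt, iteratedDeriv_const_smul_field,
        hwψ j hj, smul_eq_mul, sub_self]
    have := taylor_isLittleO_of_iteratedDeriv_eq_zero (f := w - e • ψ) (hw.sub heψ)
      fun j hj => hdiff j hj.le
    rw [hdiff m le_rfl] at this
    simp only [smul_zero, sub_zero] at this
    exact this.trans_isBigO hpow
  have hψne : ∀ᶠ x in 𝓝[≠] b, ψ x ≠ 0 := by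
    filter_upwards [nhdsWithin_le_nhds hpow.eq_zero_imp, self_mem_nhdsWithin] with x hx hxb
    exact fun h0 => pow_ne_zero m (sub_ne_zero.mpr hxb) (hx h0)
  have hlim := (hu.tendsto_div_nhds_zero.mono_left (nhdsWithin_le_nhds (s := {b}ᶜ))).const_add e
  rw [add_zero] at hlim
  refine hlim.congr' ?_
  filter_upwards [hψne] with x hx
  simp only [Pi.sub_apply, Pi.smul_apply, smul_eq_mul]
  field_simp
  ring

lemma eq_mul_cexp_of_LOp_singleton_eq_zero {g : ℝ → ℂ} {c : ℂ} (hg : Differentiable ℝ g)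
    (h : LOp [c] g = 0) (a x : ℝ) : g x = g a * Complex.exp (((x : ℂ) - a) * c) := by
  have hderiv : ∀ y,
      HasDerivAt (fun y : ℝ => Complex.exp (-(((y : ℂ) - a) * c)) * g y) 0 y := by
    intro y
    have hlin : HasDerivAt (fun y : ℝ => -(((y : ℂ) - a) * c)) (-c) y := by
      simpa using (((hasDerivAt_id y).ofReal_comp).sub_const (a : ℂ)).mul_const c |>.fun_neg
    have hgy : deriv g y = c * g y := by
      simpa [LOp_singleton, sub_eq_zero] using congrFun h y
    exact (hlin.cexp.mul (hg y).hasDerivAt).congr_deriv (by rw [hgy]; ring)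
  have hconst := is_const_of_deriv_eq_zero (fun y => (hderiv y).differentiableAt)
    (fun y => (hderiv y).deriv) x a
  simp only [sub_self, zero_mul, neg_zero, Complex.exp_zero, one_mul] at hconst
  rw [← hconst, mul_right_comm, ← Complex.exp_add, neg_add_cancel, Complex.exp_zero, one_mul]

lemma sum_range_alternating_prod_mul_add_mul {R : Type*} [CommRing R] (d Q : ℕ → R) (n : ℕ) :
    ∑ k ∈ range n, (-1) ^ k * (∏ i ∈ range k, d i) * (Q k + d k * Q (k + 1)) =
      Q 0 - (-1) ^ n * (∏ i ∈ range n, d i) * Q n := by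
  induction n with
  | zero => simp
  | succ n ih =>
    rw [sum_range_succ, ih, prod_range_succ, pow_succ]
    ring

namespace IsBernsteinBasis

variable {l : List ℂ} {a b : ℝ} {p : ℕ → ℝ → ℂ} {k j : ℕ}

lemma mem (h : IsBernsteinBasis l a b p) (hk : k ≤ l.length - 1) : p k ∈ ExpPoly l :=
  (h k hk).1

lemma iteratedDeriv_left_eq_zero (h : IsBernsteinBasis l a b p) (hk : k ≤ l.length - 1)
    (hj : j < k) : iteratedDeriv j (p k) a = 0 :=
  (h k hk).2.1.1 j hj

lemma iteratedDeriv_left_self (h : IsBernsteinBasis l a b p) (hk : k ≤ l.length - 1) :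
    iteratedDeriv k (p k) a = 1 :=
  (h k hk).2.2.2

lemma hasZeroOfOrder_right (h : IsBernsteinBasis l a b p) (hk : k ≤ l.length - 1) :
    HasZeroOfOrder (p k) b (l.length - 1 - k) :=
  (h k hk).2.2.1

end IsBernsteinBasis

/-- `prependZero q k` is the paper's `q_{k−1}`, with `q_{−1} = 0`. -/
def prependZero (q : ℕ → ℝ → ℂ) : ℕ → ℝ → ℂ
  | 0 => 0
  | k + 1 => q k

@[simp] lemma prependZero_zero (q : ℕ → ℝ → ℂ) : prependZero q 0 = 0 := rfl

@[simp] lemma prependZero_succ (q : ℕ → ℝ → ℂ) (k : ℕ) : prependZero q (k + 1) = q k :=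
  rfl

section Bernstein

variable {l : List ℂ} {c : ℂ} {a b : ℝ} {p q : ℕ → ℝ → ℂ} {k j : ℕ}

lemma prependZero_mem (hq : IsBernsteinBasis l a b q) (hk : k ≤ l.length) :
    prependZero q k ∈ ExpPoly l := by
  cases k with
  | zero => exact ExpPoly.zero_mem l
  | succ k => exact hq.mem (by omega)

lemma iteratedDeriv_prependZero_left (hq : IsBernsteinBasis l a b q) (hk : k ≤ l.length)
    (hj : j < k) : iteratedDeriv j (prependZero q k) a = if j + 1 = k then 1 else 0 := by
  cases k with
  | zero => omega
  | succ k =>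
    rw [prependZero]
    split_ifs with hjk
    · obtain rfl : j = k := by omega
      exact hq.iteratedDeriv_left_self (by omega)
    · exact hq.iteratedDeriv_left_eq_zero (by omega) (by omega)

lemma iteratedDeriv_prependZero_right (hq : IsBernsteinBasis l a b q) (hk : k ≤ l.length)
    (hj : j < l.length - k) : iteratedDeriv j (prependZero q k) b = 0 := by
  cases k with
  | zero => simp [prependZero]
  | succ k => exact (hq.hasZeroOfOrder_right (by omega)).1 j (by omega)

lemma LOp_sub_prependZero_mem (hp : IsBernsteinBasis (l ++ [c]) a b p)
    (hq : IsBernsteinBasis l a b q) (hk : k ≤ l.length) :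
    LOp [c] (p k) - prependZero q k ∈ ExpPoly l :=
  ExpPoly.sub_mem (ExpPoly.LOp_singleton_mem (hp.mem (by simpa using hk)))
    (prependZero_mem hq hk)

lemma iteratedDeriv_LOp_sub_prependZero_left (hp : IsBernsteinBasis (l ++ [c]) a b p)
    (hq : IsBernsteinBasis l a b q) (hk : k ≤ l.length) (hj : j < k) :
    iteratedDeriv j (LOp [c] (p k) - prependZero q k) a = 0 := by
  have hpk := hp.mem (k := k) (by simpa using hk)
  rw [ExpPoly.iteratedDeriv_sub (ExpPoly.LOp_singleton_mem hpk) (prependZero_mem hq hk),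
    iteratedDeriv_LOp_singleton hpk.1, iteratedDeriv_prependZero_left hq hk hj,
    hp.iteratedDeriv_left_eq_zero (by simpa using hk) hj, mul_zero, sub_zero]
  split_ifs with hjk
  · subst hjk
    rw [hp.iteratedDeriv_left_self (by simpa using hk), sub_self]
  · rw [hp.iteratedDeriv_left_eq_zero (by simpa using hk) (by omega), sub_self]

lemma iteratedDeriv_LOp_sub_prependZero_right (hp : IsBernsteinBasis (l ++ [c]) a b p)
    (hq : IsBernsteinBasis l a b q) (hk : k ≤ l.length) (hj : j < l.length - 1 - k) :
    iteratedDeriv j (LOp [c] (p k) - prependZero q k) b = 0 := by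
  have hpk := hp.mem (k := k) (by simpa using hk)
  have hpb := (hp.hasZeroOfOrder_right (k := k) (by simpa using hk)).1
  simp only [List.length_append, List.length_singleton, Nat.add_sub_cancel] at hpb
  rw [ExpPoly.iteratedDeriv_sub (ExpPoly.LOp_singleton_mem hpk) (prependZero_mem hq hk),
    iteratedDeriv_LOp_singleton hpk.1, iteratedDeriv_prependZero_right hq hk (by omega),
    hpb j (by omega), hpb (j + 1) (by omega)]
  ring

lemma LOp_bernstein_last (hab : a ≠ b) (hl : IsExtChebyshev l {a, b})
    (hp : IsBernsteinBasis (l ++ [c]) a b p) (hq : IsBernsteinBasis l a b q) :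
    LOp [c] (p l.length) = prependZero q l.length :=
  sub_eq_zero.mp <| hl.eq_zero hab (LOp_sub_prependZero_mem hp hq le_rfl) (A := l.length)
    (B := 0) (by omega) (fun _ hj => iteratedDeriv_LOp_sub_prependZero_left hp hq le_rfl hj)
    (by simp)

lemma exists_LOp_bernstein_eq (hab : a ≠ b) (hl : IsExtChebyshev l {a, b})
    (hp : IsBernsteinBasis (l ++ [c]) a b p) (hq : IsBernsteinBasis l a b q)
    (hk : k < l.length) : ∃ e : ℂ, LOp [c] (p k) - prependZero q k = e • q k := by
  have hr := LOp_sub_prependZero_mem hp hq hk.le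
  have hqk := hq.mem (k := k) (by omega)
  refine ⟨iteratedDeriv k (LOp [c] (p k) - prependZero q k) a, ?_⟩
  rw [← sub_eq_zero]
  refine hl.eq_zero hab (ExpPoly.sub_mem hr (ExpPoly.smul_mem hqk _)) (A := k + 1)
    (B := l.length - 1 - k) (by omega) (fun j hj => ?_) (fun j hj => ?_)
  all_goals rw [ExpPoly.iteratedDeriv_sub hr (ExpPoly.smul_mem hqk _),
    iteratedDeriv_const_smul_field, smul_eq_mul]
  · rcases (Nat.lt_succ_iff.mp hj).lt_or_eq with hjk | rfl
    · rw [iteratedDeriv_LOp_sub_prependZero_left hp hq hk.le hjk,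
        hq.iteratedDeriv_left_eq_zero (by omega) hjk]
      ring
    · rw [hq.iteratedDeriv_left_self (by omega)]
      ring
  · rw [iteratedDeriv_LOp_sub_prependZero_right hp hq hk.le hj,
      (hq.hasZeroOfOrder_right (by omega)).1 j hj]
    ring

lemma tendsto_deriv_div_bernstein (hp : IsBernsteinBasis (l ++ [c]) a b p)
    (hq : IsBernsteinBasis l a b q) (hk : k < l.length) {e : ℂ}
    (he : LOp [c] (p k) - prependZero q k = e • q k) :
    Tendsto (fun x => deriv (p k) x / q k x) (𝓝[≠] b) (𝓝 e) := by
  have hpk := hp.mem (k := k) (by simp; omega)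
  have hpb := (hp.hasZeroOfOrder_right (k := k) (by simp; omega)).1
  simp only [List.length_append, List.length_singleton, Nat.add_sub_cancel] at hpb
  refine tendsto_div_of_iteratedDeriv_eq_mul (m := l.length - 1 - k)
    (contDiff_infty.mp (contDiff_infty_iff_deriv.mp hpk.1).2 _)
    (contDiff_infty.mp (hq.mem (by omega)).1 _) (hq.hasZeroOfOrder_right (by omega))
    fun j hj => ?_
  have hej := congrArg (fun f => iteratedDeriv j f b) he
  rw [ExpPoly.iteratedDeriv_sub (ExpPoly.LOp_singleton_mem hpk) (prependZero_mem hq hk.le),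
    iteratedDeriv_LOp_singleton hpk.1, iteratedDeriv_prependZero_right hq hk.le (by omega),
    hpb j (by omega), iteratedDeriv_const_smul_field, smul_eq_mul] at hej
  rw [← iteratedDeriv_succ', ← hej]
  ring

lemma LOp_bernstein_eq (hab : a ≠ b) (hl : IsExtChebyshev l {a, b})
    (hp : IsBernsteinBasis (l ++ [c]) a b p) (hq : IsBernsteinBasis l a b q)
    (hk : k < l.length) {d : ℂ}
    (hd : Tendsto (fun x => deriv (p k) x / q k x) (𝓝[<] b) (𝓝 d)) :
    LOp [c] (p k) = prependZero q k + d • q k := by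
  obtain ⟨e, he⟩ := exists_LOp_bernstein_eq hab hl hp hq hk
  rw [← sub_eq_iff_eq_add', he, tendsto_nhds_unique hd
    ((tendsto_deriv_div_bernstein hp hq hk he).mono_left (nhdsLT_le_nhdsNE b))]

lemma LOp_sum_bernstein_eq_zero (hab : a ≠ b) (hl : IsExtChebyshev l {a, b})
    (hp : IsBernsteinBasis (l ++ [c]) a b p) (hq : IsBernsteinBasis l a b q) {d : ℕ → ℂ}
    (hd : ∀ k < l.length, Tendsto (fun x => deriv (p k) x / q k x) (𝓝[<] b) (𝓝 (d k))) :
    LOp [c] (fun x => ∑ k ∈ range (l.length + 1), (-1) ^ k * (∏ i ∈ range k, d i) * p k x) =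
      0 := by
  have hpk : ∀ k ∈ range (l.length + 1), p k ∈ ExpPoly (l ++ [c]) := fun k hk =>
    hp.mem (by simpa [Nat.lt_succ_iff] using hk)
  ext x
  rw [LOp_singleton, Pi.sub_apply, Pi.smul_apply, smul_eq_mul, Pi.zero_apply,
    deriv_fun_sum fun k hk => ((hpk k hk).1.differentiable (by simp)).differentiableAt.const_mul _,
    mul_sum, ← sum_sub_distrib]
  have hterm : ∀ k ∈ range (l.length + 1),
      deriv (fun y => (-1) ^ k * (∏ i ∈ range k, d i) * p k y) x
        - c * ((-1) ^ k * (∏ i ∈ range k, d i) * p k x) =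
      (-1) ^ k * (∏ i ∈ range k, d i) * LOp [c] (p k) x := fun k hk => by
    rw [deriv_const_mul _ ((hpk k hk).1.differentiable (by simp)).differentiableAt, LOp_singleton]
    simp only [Pi.sub_apply, Pi.smul_apply, smul_eq_mul]
    ring
  rw [sum_congr rfl hterm, sum_range_succ, LOp_bernstein_last hab hl hp hq,
    sum_congr rfl fun k hk => by
      rw [LOp_bernstein_eq hab hl hp hq (mem_range.mp hk) (hd k (mem_range.mp hk))]]
  have := sum_range_alternating_prod_mul_add_mul d (fun k => prependZero q k x) l.length
  simp only [prependZero_zero, prependZero_succ, Pi.zero_apply] at this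
  simp only [Pi.add_apply, Pi.smul_apply, smul_eq_mul]
  rw [this]
  ring

lemma cexp_eq_sum_bernstein (hab : a ≠ b) (hl : IsExtChebyshev l {a, b})
    (hp : IsBernsteinBasis (l ++ [c]) a b p) (hq : IsBernsteinBasis l a b q) {d : ℕ → ℂ}
    (hd : ∀ k < l.length, Tendsto (fun x => deriv (p k) x / q k x) (𝓝[<] b) (𝓝 (d k)))
    (x : ℝ) : Complex.exp (((x : ℂ) - a) * c) =
      ∑ k ∈ range (l.length + 1), (-1) ^ k * (∏ i ∈ range k, d i) * p k x := by
  have hdiff : Differentiable ℝ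
      fun x => ∑ k ∈ range (l.length + 1), (-1) ^ k * (∏ i ∈ range k, d i) * p k x :=
    Differentiable.fun_sum fun k hk =>
      ((hp.mem (by simpa [Nat.lt_succ_iff] using hk)).1.differentiable (by simp)).const_mul _
  have hat : ∑ k ∈ range (l.length + 1), (-1) ^ k * (∏ i ∈ range k, d i) * p k a = 1 := by
    rw [sum_eq_single_of_mem 0 (by simp) fun k hk hk0 => ?_]
    · simpa using hp.iteratedDeriv_left_self (k := 0) (by simp)
    · simpa using Or.inr (hp.iteratedDeriv_left_eq_zero (j := 0)
        (by simpa [Nat.lt_succ_iff] using hk) (Nat.pos_of_ne_zero hk0))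
  rw [eq_mul_cexp_of_LOp_singleton_eq_zero hdiff (LOp_sum_bernstein_eq_zero hab hl hp hq hd) a x,
    hat, one_mul]

lemma cexp_right_eq_bernstein_last (hab : a ≠ b) (hl : IsExtChebyshev l {a, b})
    (hp : IsBernsteinBasis (l ++ [c]) a b p) (hq : IsBernsteinBasis l a b q) {d : ℕ → ℂ}
    (hd : ∀ k < l.length, Tendsto (fun x => deriv (p k) x / q k x) (𝓝[<] b) (𝓝 (d k))) :
    Complex.exp (((b : ℂ) - a) * c) =
      (-1) ^ l.length * (∏ i ∈ range l.length, d i) * p l.length b := by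
  rw [cexp_eq_sum_bernstein hab hl hp hq hd, sum_range_succ, sum_eq_zero fun k hk => ?_, zero_add]
  have hpkb := (hp.hasZeroOfOrder_right (k := k) (by simp at hk ⊢; omega)).1 0
    (by simp at hk ⊢; omega)
  rw [iteratedDeriv_zero] at hpkb
  rw [hpkb, mul_zero]

end Bernstein

theorem exp_representation_in_bernstein_basis_general
    (n : ℕ) (l' : List ℂ) (hl' : l'.length = n) (lamn : ℂ)
    (a b : ℝ) (hab : a ≠ b)
    (hcheb' : IsExtChebyshev l' {a, b})
    (p q : ℕ → ℝ → ℂ)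
    (hp : IsBernsteinBasis (l' ++ [lamn]) a b p)
    (hq : IsBernsteinBasis l' a b q)
    (d : ℕ → ℂ)
    (hd : ∀ k < n, Tendsto (fun x => deriv (p k) x / q k x) (𝓝[<] b) (𝓝 (d k)))
    (hd0 : ∀ k < n, d k ≠ 0) :
    (∀ x : ℝ, Complex.exp (((x : ℂ) - (a : ℂ)) * lamn) =
      p 0 x + ∑ k ∈ Finset.Icc 1 n,
        (-1 : ℂ) ^ k * (∏ l ∈ Finset.range k, d l) * p k x) ∧
    (∀ k, 1 ≤ k → k ≤ n - 1 →
      ∏ l ∈ Finset.range k, d l =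
        (-1 : ℂ) ^ n * Complex.exp (((b : ℂ) - (a : ℂ)) * lamn) /
          (p n b * ∏ l ∈ Finset.Icc k (n - 1), d l)) := by
  subst hl'
  refine ⟨fun x => ?_, fun k hk1 hkn => ?_⟩
  · rw [cexp_eq_sum_bernstein hab hcheb' hp hq hd, range_eq_Ico,
      sum_eq_sum_Ico_succ_bot (by omega), Finset.Ico_add_one_right_eq_Icc]
    simp
  have hpb : p l'.length b ≠ 0 := by
    simpa using (hp.hasZeroOfOrder_right (k := l'.length) (by simp)).2
  have htail : ∏ i ∈ Icc k (l'.length - 1), d i ≠ 0 :=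
    prod_ne_zero_iff.mpr fun i hi => hd0 i (by simp at hi; omega)
  have hsplit : ∏ i ∈ range l'.length, d i =
      (∏ i ∈ range k, d i) * ∏ i ∈ Icc k (l'.length - 1), d i := by
    rw [← prod_range_mul_prod_Ico d (by omega : k ≤ l'.length)]
    congr 2
    ext i
    simp only [Finset.mem_Ico, Finset.mem_Icc]
    omega
  have hsq : (-1 : ℂ) ^ l'.length * (-1) ^ l'.length = 1 := by rw [← mul_pow]; norm_num
  rw [eq_div_iff (mul_ne_zero hpb htail), cexp_right_eq_bernstein_last hab hcheb' hp hq hd, hsplit]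
  linear_combination
    (-(∏ i ∈ range k, d i) * (∏ i ∈ Icc k (l'.length - 1), d i) * p l'.length b) * hsq

/-- **Theorem (representation of `e^{λ_n(x−a)}` in the Bernstein basis).**
Suppose `E_{(λ_0,…,λ_n)}` and `E_{(λ_0,…,λ_{n−1})}` are extended Chebyshev systems
for `{a,b}`, `a ≠ b ∈ ℝ`, with Bernstein bases `p` resp. `q`, and let
`d_k = lim_{x↑b} (p k)'(x) / q k (x)`, `k = 0,…,n−1` (these limits exist and are
nonzero).  Then `e^{(x−a)λ_n} = p 0 (x) + ∑_{k=1}^{n} (−1)^k d_0⋯d_{k−1} p k (x)`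
for all `x`, and for each `k = 1,…,n−1`,
`d_0⋯d_{k−1} = (−1)^n e^{(b−a)λ_n} / (p n (b) · d_k⋯d_{n−1})`. -/
theorem exp_representation_in_bernstein_basis
    (n : ℕ) (hn : 1 ≤ n) (l' : List ℂ) (hl' : l'.length = n) (lamn : ℂ)
    (a b : ℝ) (hab : a ≠ b)
    (hcheb : IsExtChebyshev (l' ++ [lamn]) {a, b})
    (hcheb' : IsExtChebyshev l' {a, b})
    (p q : ℕ → ℝ → ℂ)
    (hp : IsBernsteinBasis (l' ++ [lamn]) a b p)
    (hq : IsBernsteinBasis l' a b q)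
    (d : ℕ → ℂ)
    (hd : ∀ k < n, Tendsto (fun x => deriv (p k) x / q k x) (𝓝[<] b) (𝓝 (d k)))
    (hd0 : ∀ k < n, d k ≠ 0) :
    (∀ x : ℝ, Complex.exp (((x : ℂ) - (a : ℂ)) * lamn) =
      p 0 x + ∑ k ∈ Finset.Icc 1 n,
        (-1 : ℂ) ^ k * (∏ l ∈ Finset.range k, d l) * p k x) ∧
    (∀ k, 1 ≤ k → k ≤ n - 1 →
      ∏ l ∈ Finset.range k, d l =
        (-1 : ℂ) ^ n * Complex.exp (((b : ℂ) - (a : ℂ)) * lamn) /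
          (p n b * ∏ l ∈ Finset.Icc k (n - 1), d l)) :=
  exp_representation_in_bernstein_basis_general n l' hl' lamn a b hab hcheb' p q hp hq d hd hd0
end
end
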